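/- Let b ∈ ℝ⁴ (real entries) with |b| < 1, δ = 1 − b·b > 0, θ = i√3. Then the matrix Z = ωI + (θ/δ)N (with N as above: N₀₀ = b·b, N₀ⱼ = Nⱼ₀ = −bⱼ, Nᵢⱼ = bᵢbⱼ for i,j ≥ 1) has positive-definite imaginary part; i.e., Z lies in the Siegel upper half space ℍ₅. -/

import Mathlib

open Complex Finset Matrix

/-!
Since `Im ω = √3/2` and `θ/δ = (√3/δ) i` with `δ = 1 - |b|²` real, `Im Z = (√3/(2δ)) (δ I + 2N)`
with `N` real symmetric. `N` itself is indefinite, but writing `x = (t, y)`, `s = b ⬝ y`, `q = |y|²`,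
the quadratic form `Q` of `δ I + 2N` satisfies
`(1 + |b|²) Q = ((1 + |b|²) t - 2s)² + δ² q + 2δ (|b|² q - s²)`,
which is positive for `x ≠ 0` by Cauchy–Schwarz.
-/

lemma quadratic_form_pos_of_sq_le_mul {B t s q : ℝ} (hB0 : 0 ≤ B) (hB1 : B < 1) (hq : 0 ≤ q)
    (hcs : s ^ 2 ≤ B * q) (htq : 0 < t ^ 2 + q) :
    0 < (1 - B) * (t ^ 2 + q) + 2 * (B * t ^ 2 - 2 * t * s + s ^ 2) := by
  have hsos : (1 + B) * ((1 - B) * (t ^ 2 + q) + 2 * (B * t ^ 2 - 2 * t * s + s ^ 2))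
      = ((1 + B) * t - 2 * s) ^ 2 + (1 - B) ^ 2 * q + 2 * (1 - B) * (B * q - s ^ 2) := by ring
  refine pos_of_mul_pos_right (hsos ▸ ?_) (by linarith : (0 : ℝ) ≤ 1 + B)
  rcases hq.eq_or_lt with rfl | hq
  · have hs : s = 0 := by nlinarith
    subst hs
    have ht : 0 < ((1 + B) * t) ^ 2 := by
      have : t ≠ 0 := by rintro rfl; norm_num at htq
      positivity
    simpa using ht
  · have : 0 < (1 - B) ^ 2 * q := by positivity
    nlinarith [sq_nonneg ((1 + B) * t - 2 * s)]

lemma im_exp_two_pi_mul_I_div_three :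
    (Complex.exp (2 * Real.pi * Complex.I / 3)).im = Real.sqrt 3 / 2 := by
  have h : 2 * Real.pi * Complex.I / 3 = ((Real.pi - Real.pi / 3 : ℝ) : ℂ) * Complex.I := by
    push_cast; ring
  rw [h, Complex.exp_ofReal_mul_I_im, Real.sin_pi_sub, Real.sin_pi_div_three]

section

variable {ι : Type*} [Fintype ι]

def siegelN (b : ι → ℝ) : Matrix (Option ι) (Option ι) ℝ := Matrix.of fun i j => match i, j with
  | none, none => ∑ k, b k ^ 2
  | none, some j => -b j
  | some i, none => -b i
  | some i, some j => b i * b j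

lemma siegelN_transpose (b : ι → ℝ) : (siegelN b)ᵀ = siegelN b := by
  ext (_ | i) (_ | j) <;> simp [siegelN, mul_comm]

lemma siegelN_mulVec_none (b : ι → ℝ) (x : Option ι → ℝ) :
    (siegelN b *ᵥ x) none = (∑ k, b k ^ 2) * x none - ∑ k, b k * x (some k) := by
  simp [mulVec, dotProduct, Fintype.sum_option, siegelN, sub_eq_add_neg]

lemma siegelN_mulVec_some (b : ι → ℝ) (x : Option ι → ℝ) (i : ι) :
    (siegelN b *ᵥ x) (some i) = b i * ((∑ k, b k * x (some k)) - x none) := by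
  simp [mulVec, dotProduct, Fintype.sum_option, siegelN, mul_sub, mul_sum, mul_assoc]
  ring

lemma dotProduct_siegelN_mulVec (b : ι → ℝ) (x : Option ι → ℝ) :
    x ⬝ᵥ (siegelN b *ᵥ x) = (∑ k, b k ^ 2) * x none ^ 2
      - 2 * x none * (∑ k, b k * x (some k)) + (∑ k, b k * x (some k)) ^ 2 := by
  have hsum : ∑ i, x (some i) * (b i * ((∑ k, b k * x (some k)) - x none))
      = (∑ k, b k * x (some k)) * ((∑ k, b k * x (some k)) - x none) := by
    rw [sum_mul]
    exact sum_congr rfl fun i _ => by ring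
  rw [dotProduct, Fintype.sum_option, siegelN_mulVec_none]
  simp only [siegelN_mulVec_some, hsum]
  ring

theorem posDef_siegelN [DecidableEq ι] (b : ι → ℝ) (hb : ∑ i, b i ^ 2 < 1) :
    ((1 - ∑ i, b i ^ 2) • (1 : Matrix (Option ι) (Option ι) ℝ) + (2 : ℝ) • siegelN b).PosDef := by
  refine .of_dotProduct_mulVec_pos ?_ fun x hx => ?_
  · simp [IsHermitian, conjTranspose_eq_transpose_of_trivial, siegelN_transpose]
  · have hx : 0 < x none ^ 2 + ∑ i, x (some i) ^ 2 := by
      simpa [dotProduct, Fintype.sum_option, sq] using dotProduct_star_self_pos_iff.mpr hx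
    simp only [star_trivial, add_mulVec, smul_mulVec, one_mulVec, dotProduct_add, dotProduct_smul,
      dotProduct_siegelN_mulVec, smul_eq_mul]
    rw [dotProduct, Fintype.sum_option]
    simp only [← sq]
    exact quadratic_form_pos_of_sq_le_mul (sum_nonneg fun i _ => sq_nonneg (b i)) hb
      (sum_nonneg fun i _ => sq_nonneg (x (some i))) (sum_mul_sq_le_sq_mul_sq _ _ _) hx

end

/-- For real `b` with `|b| < 1`, the matrix `Z = ωI + (θ/δ)N` is symmetric and
has positive-definite imaginary part, i.e. it lies in the Siegel upper half
space `ℍ₅`. -/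
theorem Z_in_Siegel_real (b : Fin 4 → ℝ)
    (hb : ∑ i, (b i) ^ 2 < 1)
    (δ θ ω : ℂ)
    (hδ : δ = 1 - ∑ i, ((b i : ℂ)) ^ 2)
    (hθ : θ = Complex.I * Real.sqrt 3)
    (hω : ω = Complex.exp (2 * Real.pi * Complex.I / 3))
    (N Z : Matrix (Option (Fin 4)) (Option (Fin 4)) ℂ)
    (hN : ∀ i j, N i j = match i, j with
      | none, none => ∑ k, ((b k : ℂ)) ^ 2
      | none, some j => -(b j : ℂ)
      | some i, none => -(b i : ℂ)
      | some i, some j => (b i : ℂ) * (b j : ℂ))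
    (hZ : Z = ω • (1 : Matrix (Option (Fin 4)) (Option (Fin 4)) ℂ) + (θ / δ) • N) :
    Zᵀ = Z ∧ Matrix.PosDef (Matrix.of fun i j => (Z i j).im) := by
  set d : ℝ := 1 - ∑ i, b i ^ 2
  have hd : 0 < d := sub_pos.mpr hb
  have hN' : N = (siegelN b).map ofReal := by
    ext (_ | i) (_ | j) <;> simp [hN, siegelN]
  have hθδ : θ / δ = ((Real.sqrt 3 / d : ℝ) : ℂ) * I := by
    have hδd : δ = (d : ℂ) := by simp [hδ, d]
    have hd' : (d : ℂ) ≠ 0 := ofReal_ne_zero.mpr hd.ne'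
    rw [hθ, hδd]
    push_cast
    field_simp
  have him : (Matrix.of fun i j => (Z i j).im)
      = (Real.sqrt 3 / (2 * d)) • (d • (1 : Matrix _ _ ℝ) + (2 : ℝ) • siegelN b) := by
    ext i j
    rw [hZ, hN', hθδ, hω]
    by_cases hij : i = j <;>
      simp [hij, one_apply, im_exp_two_pi_mul_I_div_three] <;> field_simp
  refine ⟨?_, him ▸ (posDef_siegelN b hb).smul (by positivity)⟩
  rw [hZ, transpose_add, transpose_smul, transpose_smul, transpose_one, hN', ← transpose_map,
    siegelN_transpose]
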